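/- arXiv:quant-ph/0203142 — 5 statements merged into one kernel-verified Lean document; each statement's English description precedes it below -/
import Mathlib

section
/- Fix a positive integer d, constants m, ω > 0, points x₀, p₀ ∈ ℝ^d, a compact set K ⊂ ℝ^d, and a number s with 0 < s < π. Then for all sufficiently large r > 0 and all x ∈ K there exists a complex number θ with |θ| < s satisfying cos θ = r^{-2} (a(x̃₀, p̃₀) · x̃) (where the dot denotes the bilinear product Σ_k a_k x̃_k on ℂ^{d+1}); moreover, if θ and θ′ are two such solutions with |θ| < s and |θ′| < s, then θ′ = θ or θ′ = −θ. -/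
open Filter Metric Topology

/-- The classical "complexified position" `a(x,p)` for the sphere of radius `r`:
`a(x,p) = cosh(j/(mωr²)) x + i (r²/j) sinh(j/(mωr²)) p` with `j = r|p|`, and `a(x,0) = x`. -/
noncomputable def aFun {n : ℕ} (m ω r : ℝ) (x p : Fin n → ℝ) : Fin n → ℂ :=
  if p = 0 then fun i => (x i : ℂ)
  else fun i =>
    (↑(Real.cosh (r * Real.sqrt (∑ j, p j ^ 2) / (m * ω * r ^ 2)) * x i) : ℂ) +
      Complex.I *
        (↑((r ^ 2 / (r * Real.sqrt (∑ j, p j ^ 2))) *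
            Real.sinh (r * Real.sqrt (∑ j, p j ^ 2) / (m * ω * r ^ 2)) * p i) : ℂ)

/-- The point `x̃ = (x, √(r² − x²))` on the sphere of radius `r`. -/
noncomputable def tildeX {d : ℕ} (r : ℝ) (x : Fin d → ℝ) : Fin (d + 1) → ℝ :=
  Fin.snoc x (Real.sqrt (r ^ 2 - ∑ i, x i ^ 2))

/-- The tangent vector `p̃ = (p, −(p·x)/√(r² − x²))`. -/
noncomputable def tildeP {d : ℕ} (r : ℝ) (x p : Fin d → ℝ) : Fin (d + 1) → ℝ :=
  Fin.snoc p (-(∑ i, p i * x i) / Real.sqrt (r ^ 2 - ∑ i, x i ^ 2))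

/-! As `r → ∞`, `w_r(x) = r⁻² a(x̃₀, p̃₀) · x̃` tends to `1` uniformly on `K`. With
`c = j/(mωr²) → 0`, the real part of `w_r(x)` is `cosh c · (x̃₀ · x̃)/r²`, and
`x̃₀ · x̃ / r² = 1 + O(r⁻²)` because both points lie on the sphere of radius `r` while `x₀, x`
stay bounded; by Cauchy–Schwarz on that sphere the imaginary part is at most `|sinh c|`.
By the open mapping theorem, `cos` maps the ball of radius `s` about `0` onto a neighbourhood
of `cos 0 = 1`, which gives existence. Uniqueness up to sign holds because `cos θ = cos θ'`
forces `θ' = ±θ + 2kπ`, and `‖θ‖, ‖θ'‖ < π` leaves only `k = 0`. -/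

namespace Complex

theorem int_eq_zero_of_norm_two_mul_pi_lt {k : ℤ} (h : ‖2 * (k : ℂ) * Real.pi‖ < 2 * Real.pi) :
    k = 0 := by
  have hnorm : ‖2 * (k : ℂ) * Real.pi‖ = 2 * Real.pi * |(k : ℝ)| := by
    rw [norm_mul, norm_mul, norm_real, norm_intCast, Real.norm_of_nonneg Real.pi_pos.le]
    norm_num
    ring
  rw [hnorm] at h
  have : |(k : ℝ)| < 1 := by nlinarith [Real.pi_pos]
  exact Int.abs_lt_one_iff.1 (by exact_mod_cast this)

theorem eq_or_eq_neg_of_cos_eq_cos {θ θ' : ℂ} (hθ : ‖θ‖ < Real.pi) (hθ' : ‖θ'‖ < Real.pi)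
    (h : cos θ = cos θ') : θ' = θ ∨ θ' = -θ := by
  obtain ⟨k, hk | hk⟩ := cos_eq_cos_iff.1 h
  · have hk0 : k = 0 := int_eq_zero_of_norm_two_mul_pi_lt <| by
      calc ‖2 * (k : ℂ) * Real.pi‖ = ‖θ' - θ‖ := by rw [hk, add_sub_cancel_right]
        _ ≤ ‖θ'‖ + ‖θ‖ := norm_sub_le _ _
        _ < 2 * Real.pi := by linarith
    left; simpa [hk0] using hk
  · have hk0 : k = 0 := int_eq_zero_of_norm_two_mul_pi_lt <| by
      calc ‖2 * (k : ℂ) * Real.pi‖ = ‖θ' + θ‖ := by rw [hk, sub_add_cancel]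
        _ ≤ ‖θ'‖ + ‖θ‖ := norm_add_le _ _
        _ < 2 * Real.pi := by linarith
    right; simpa [hk0] using hk

theorem cos_image_ball_mem_nhds_one {s : ℝ} (hs : 0 < s) : cos '' ball 0 s ∈ 𝓝 1 := by
  obtain ⟨w, hw⟩ | hopen := (analyticOnNhd_cos (s := Set.univ)).is_constant_or_isOpen
    isPreconnected_univ
  · have h := (hw 0 trivial).trans (hw Real.pi trivial).symm
    rw [cos_zero, cos_pi] at h
    norm_num at h
  · exact (hopen _ (Set.subset_univ _) isOpen_ball).mem_nhds ⟨0, mem_ball_self hs, cos_zero⟩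

end Complex

theorem sum_mul_le_of_sum_sq_le {ι : Type*} [Fintype ι] {u v : ι → ℝ} {B : ℝ}
    (hu : ∑ i, u i ^ 2 ≤ B) (hv : ∑ i, v i ^ 2 ≤ B) : ∑ i, u i * v i ≤ B := by
  have : ∑ i, 2 * (u i * v i) ≤ ∑ i, (u i ^ 2 + v i ^ 2) :=
    Finset.sum_le_sum fun i _ => by linarith [two_mul_le_add_sq (u i) (v i)]
  rw [← Finset.mul_sum, Finset.sum_add_distrib] at this
  linarith

theorem abs_sum_mul_le_sqrt_mul {ι : Type*} [Fintype ι] {p v : ι → ℝ} {r : ℝ} (hr : 0 ≤ r)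
    (hv : ∑ i, v i ^ 2 ≤ r ^ 2) : |∑ i, p i * v i| ≤ √(∑ i, p i ^ 2) * r := by
  calc |∑ i, p i * v i| ≤ √((∑ i, p i ^ 2) * ∑ i, v i ^ 2) :=
        Real.abs_le_sqrt (Finset.sum_mul_sq_le_sq_mul_sq _ _ _)
    _ ≤ √((∑ i, p i ^ 2) * r ^ 2) :=
        Real.sqrt_le_sqrt (mul_le_mul_of_nonneg_left hv (by positivity))
    _ = √(∑ i, p i ^ 2) * r := by rw [Real.sqrt_mul (by positivity), Real.sqrt_sq hr]

/-- The paper's `j/(mωr²)` with `j = r|p|`. -/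
noncomputable def aFunArg {n : ℕ} (m ω r : ℝ) (p : Fin n → ℝ) : ℝ :=
  r * √(∑ j, p j ^ 2) / (m * ω * r ^ 2)

section AFun

variable {n : ℕ}

theorem sum_aFun_mul (m ω r : ℝ) (u p v : Fin n → ℝ) :
    ∑ i, aFun m ω r u p i * (v i : ℂ) =
      ↑(Real.cosh (aFunArg m ω r p) * ∑ i, u i * v i) +
        ↑(r ^ 2 / (r * √(∑ j, p j ^ 2)) * Real.sinh (aFunArg m ω r p) * ∑ i, p i * v i) *
          Complex.I := by
  by_cases hp : p = 0
  · subst hp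
    simp [aFun, aFunArg]
  · simp only [aFun, aFunArg, if_neg hp]
    push_cast [Finset.mul_sum, Finset.sum_mul, ← Finset.sum_add_distrib]
    exact Finset.sum_congr rfl fun i _ => by ring

theorem norm_inv_sq_mul_sum_aFun_mul_sub_one_le (m ω : ℝ) {r : ℝ} (hr : 0 < r)
    (u p v : Fin n → ℝ) (hv : ∑ i, v i ^ 2 ≤ r ^ 2) :
    ‖((r : ℂ) ^ 2)⁻¹ * ∑ i, aFun m ω r u p i * (v i : ℂ) - 1‖ ≤
      Real.cosh (aFunArg m ω r p) * |(∑ i, u i * v i) / r ^ 2 - 1| +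
        (Real.cosh (aFunArg m ω r p) - 1) + |Real.sinh (aFunArg m ω r p)| := by
  set c := aFunArg m ω r p
  set X := ∑ i, u i * v i
  set P := ∑ i, p i * v i
  set t := √(∑ j, p j ^ 2)
  have hP : |P| ≤ t * r := abs_sum_mul_le_sqrt_mul hr.le hv
  have hcosh : 1 ≤ Real.cosh c := Real.one_le_cosh c
  have hsplit : ((r : ℂ) ^ 2)⁻¹ * (((Real.cosh c * X : ℝ) : ℂ) +
      ((r ^ 2 / (r * t) * Real.sinh c * P : ℝ) : ℂ) * Complex.I) - 1 =
        ((Real.cosh c * (X / r ^ 2 - 1) + (Real.cosh c - 1) : ℝ) : ℂ) +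
          ((Real.sinh c * (P / (r * t)) : ℝ) : ℂ) * Complex.I := by
    generalize Real.cosh c = C, Real.sinh c = S
    have hr' : (r : ℂ) ≠ 0 := Complex.ofReal_ne_zero.2 hr.ne'
    -- for `p = 0` both `r ^ 2 / (r * t)` and `P / (r * t)` are `0` (division by zero)
    rcases eq_or_ne t 0 with ht | ht
    · simp only [ht, mul_zero, div_zero, zero_mul]
      push_cast
      field_simp
      ring
    · have ht' : (t : ℂ) ≠ 0 := Complex.ofReal_ne_zero.2 ht
      push_cast
      field_simp
      ring
  have hre : |Real.cosh c * (X / r ^ 2 - 1) + (Real.cosh c - 1)| ≤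
      Real.cosh c * |X / r ^ 2 - 1| + (Real.cosh c - 1) := by
    refine (abs_add_le _ _).trans ?_
    rw [abs_mul, abs_of_nonneg (by linarith : 0 ≤ Real.cosh c),
      abs_of_nonneg (by linarith : 0 ≤ Real.cosh c - 1)]
  have him : |Real.sinh c * (P / (r * t))| ≤ |Real.sinh c| := by
    rw [abs_mul]
    refine mul_le_of_le_one_right (abs_nonneg _) ?_
    rw [abs_div, abs_of_nonneg (by positivity : 0 ≤ r * t)]
    exact div_le_one_of_le₀ (by linarith [mul_comm r t]) (by positivity)
  rw [sum_aFun_mul, hsplit]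
  calc _ ≤ ‖((Real.cosh c * (X / r ^ 2 - 1) + (Real.cosh c - 1) : ℝ) : ℂ)‖ +
        ‖((Real.sinh c * (P / (r * t)) : ℝ) : ℂ) * Complex.I‖ := norm_add_le _ _
    _ ≤ _ := by
      rw [norm_mul, Complex.norm_I, mul_one, Complex.norm_real, Complex.norm_real,
        Real.norm_eq_abs, Real.norm_eq_abs]
      linarith

end AFun

section Sphere

variable {d : ℕ}

theorem sum_tildeX_sq {r : ℝ} {x : Fin d → ℝ} (hx : ∑ i, x i ^ 2 ≤ r ^ 2) :
    ∑ i, tildeX r x i ^ 2 = r ^ 2 := by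
  simp only [Fin.sum_univ_castSucc, tildeX, Fin.snoc_castSucc, Fin.snoc_last,
    Real.sq_sqrt (sub_nonneg.2 hx)]
  ring

theorem sum_tildeX_mul_tildeX (r : ℝ) (x y : Fin d → ℝ) :
    ∑ i, tildeX r x i * tildeX r y i =
      ∑ i, x i * y i + √(r ^ 2 - ∑ i, x i ^ 2) * √(r ^ 2 - ∑ i, y i ^ 2) := by
  simp only [Fin.sum_univ_castSucc, tildeX, Fin.snoc_castSucc, Fin.snoc_last]

theorem abs_sum_tildeX_mul_tildeX_div_sub_one_le {r B : ℝ} (hr : 0 < r) (hB : B ≤ r ^ 2)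
    {x y : Fin d → ℝ} (hx : ∑ i, x i ^ 2 ≤ B) (hy : ∑ i, y i ^ 2 ≤ B) :
    |(∑ i, tildeX r x i * tildeX r y i) / r ^ 2 - 1| ≤ 2 * B / r ^ 2 := by
  have hupper : ∑ i, tildeX r x i * tildeX r y i ≤ r ^ 2 :=
    sum_mul_le_of_sum_sq_le (sum_tildeX_sq (hx.trans hB)).le (sum_tildeX_sq (hy.trans hB)).le
  have hneg : -B ≤ ∑ i, x i * y i := by
    have := sum_mul_le_of_sum_sq_le (u := fun i => -x i) (v := y) (by simpa using hx) hy
    simp only [neg_mul, Finset.sum_neg_distrib] at this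
    linarith
  have hsqrt : r ^ 2 - B ≤ √(r ^ 2 - ∑ i, x i ^ 2) * √(r ^ 2 - ∑ i, y i ^ 2) := by
    rw [← Real.sq_sqrt (sub_nonneg.2 hB), sq]
    exact mul_le_mul (Real.sqrt_le_sqrt (by linarith)) (Real.sqrt_le_sqrt (by linarith))
      (Real.sqrt_nonneg _) (Real.sqrt_nonneg _)
  rw [sum_tildeX_mul_tildeX] at hupper ⊢
  have hr2 : 0 < r ^ 2 := pow_pos hr 2
  rw [div_sub_one hr2.ne', abs_div, abs_of_pos hr2]
  refine div_le_div_of_nonneg_right (abs_le.2 ⟨?_, ?_⟩) hr2.le <;> linarith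

theorem sum_tildeP_sq {r : ℝ} {x : Fin d → ℝ} (p : Fin d → ℝ) (hx : ∑ i, x i ^ 2 ≤ r ^ 2) :
    ∑ i, tildeP r x p i ^ 2 =
      ∑ i, p i ^ 2 + (∑ i, p i * x i) ^ 2 / (r ^ 2 - ∑ i, x i ^ 2) := by
  simp only [Fin.sum_univ_castSucc, tildeP, Fin.snoc_castSucc, Fin.snoc_last, div_pow, neg_sq,
    Real.sq_sqrt (sub_nonneg.2 hx)]

theorem tendsto_sum_tildeP_sq (x p : Fin d → ℝ) :
    Tendsto (fun r => ∑ i, tildeP r x p i ^ 2) atTop (𝓝 (∑ i, p i ^ 2)) := by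
  have hden : Tendsto (fun r : ℝ => r ^ 2 - ∑ i, x i ^ 2) atTop atTop :=
    tendsto_atTop_add_const_right _ _ (tendsto_pow_atTop two_ne_zero)
  have hlim := tendsto_const_nhds (x := ∑ i, p i ^ 2) |>.add
    (tendsto_const_nhds (x := (∑ i, p i * x i) ^ 2) |>.div_atTop hden)
  rw [add_zero] at hlim
  refine hlim.congr' ?_
  filter_upwards [(tendsto_pow_atTop two_ne_zero).eventually_ge_atTop (∑ i, x i ^ 2)] with r hr
  exact (sum_tildeP_sq p hr).symm

theorem tendsto_aFunArg_tildeP (m ω : ℝ) (x p : Fin d → ℝ) :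
    Tendsto (fun r => aFunArg m ω r (tildeP r x p)) atTop (𝓝 0) := by
  have hlim := ((Real.continuous_sqrt.tendsto _).comp (tendsto_sum_tildeP_sq x p)).mul
    (tendsto_const_nhds (x := (m * ω)⁻¹) |>.mul tendsto_inv_atTop_zero)
  rw [mul_zero, mul_zero] at hlim
  refine hlim.congr' ?_
  filter_upwards [eventually_ne_atTop 0] with r hr
  simp only [Function.comp_apply, aFunArg]
  field_simp

end Sphere

theorem tendstoUniformlyOn_inv_sq_mul_sum_aFun_mul_tildeX {d : ℕ} (m ω : ℝ) (x0 p0 : Fin d → ℝ)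
    {K : Set (Fin d → ℝ)} (hK : IsCompact K) :
    TendstoUniformlyOn
      (fun (r : ℝ) x => ((r : ℂ) ^ 2)⁻¹ *
        ∑ i, aFun m ω r (tildeX r x0) (tildeP r x0 p0) i * (tildeX r x i : ℂ))
      (fun _ => 1) atTop K := by
  obtain ⟨B₀, hB₀⟩ :=
    hK.bddAbove_image (f := fun x => ∑ i, x i ^ 2) (Continuous.continuousOn (by fun_prop))
  set B := max B₀ (∑ i, x0 i ^ 2)
  have hKB : ∀ x ∈ K, ∑ i, x i ^ 2 ≤ B := fun x hx => (hB₀ ⟨x, hx, rfl⟩).trans (le_max_left _ _)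
  set c := fun r => aFunArg m ω r (tildeP r x0 p0)
  have hc := tendsto_aFunArg_tildeP m ω x0 p0
  have hbound : Tendsto (fun r => Real.cosh (c r) * (2 * B / r ^ 2) + (Real.cosh (c r) - 1) +
      |Real.sinh (c r)|) atTop (𝓝 0) := by
    have hcosh := (Real.continuous_cosh.tendsto 0).comp hc
    have hsinh := (Real.continuous_sinh.tendsto 0).comp hc
    have hB := tendsto_const_nhds (x := 2 * B) |>.div_atTop (tendsto_pow_atTop two_ne_zero)
    simpa using ((hcosh.mul hB).add (hcosh.sub_const 1)).add hsinh.abs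
  rw [Metric.tendstoUniformlyOn_iff]
  intro ε hε
  filter_upwards [hbound.eventually (gt_mem_nhds hε), eventually_gt_atTop 0,
    (tendsto_pow_atTop two_ne_zero).eventually_ge_atTop B] with r hrε hr hBr x hx
  rw [dist_comm, dist_eq_norm]
  refine lt_of_le_of_lt ?_ hrε
  refine (norm_inv_sq_mul_sum_aFun_mul_sub_one_le m ω hr _ _ _
    (sum_tildeX_sq ((hKB x hx).trans hBr)).le).trans ?_
  gcongr
  exact abs_sum_tildeX_mul_tildeX_div_sub_one_le hr hBr (le_max_right _ _) (hKB x hx)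

theorem exists_unique_upto_sign_angle_general
    (d : ℕ) (m ω : ℝ)
    (x0 p0 : Fin d → ℝ) (K : Set (Fin d → ℝ)) (hK : IsCompact K)
    (s : ℝ) (hs : 0 < s) (hsπ : s < Real.pi) :
    ∀ᶠ r : ℝ in atTop, ∀ x ∈ K,
      (∃ θ : ℂ, ‖θ‖ < s ∧
          Complex.cos θ =
            (((r : ℂ)) ^ 2)⁻¹ *
              ∑ i, aFun m ω r (tildeX r x0) (tildeP r x0 p0) i * (tildeX r x i : ℂ)) ∧
      (∀ θ θ' : ℂ, ‖θ‖ < s → ‖θ'‖ < s →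
          Complex.cos θ =
            (((r : ℂ)) ^ 2)⁻¹ *
              ∑ i, aFun m ω r (tildeX r x0) (tildeP r x0 p0) i * (tildeX r x i : ℂ) →
          Complex.cos θ' =
            (((r : ℂ)) ^ 2)⁻¹ *
              ∑ i, aFun m ω r (tildeX r x0) (tildeP r x0 p0) i * (tildeX r x i : ℂ) →
          θ' = θ ∨ θ' = -θ) := by
  obtain ⟨ε, hε, hball⟩ := Metric.mem_nhds_iff.1 (Complex.cos_image_ball_mem_nhds_one hs)
  filter_upwards [Metric.tendstoUniformlyOn_iff.1
    (tendstoUniformlyOn_inv_sq_mul_sum_aFun_mul_tildeX m ω x0 p0 hK) ε hε] with r hr x hx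
  obtain ⟨θ, hθ, hcos⟩ := hball (mem_ball_comm.1 (hr x hx))
  refine ⟨⟨θ, mem_ball_zero_iff.1 hθ, hcos⟩, fun θ θ' hθ hθ' hcosθ hcosθ' => ?_⟩
  exact Complex.eq_or_eq_neg_of_cos_eq_cos (hθ.trans hsπ) (hθ'.trans hsπ) (hcosθ.trans hcosθ'.symm)

/-- Lemma 2 of Hall–Mitchell, existence/uniqueness part. Fix `d ≥ 1`,
`m, ω > 0`, `x₀, p₀ ∈ ℝ^d`, a compact `K ⊆ ℝ^d` and `0 < s < π`. For all sufficiently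
large `r` and all `x ∈ K` there is a solution `θ` of
`cos θ = r⁻² (a(x̃₀,p̃₀) · x̃)` with `|θ| < s`, and such a solution is unique up to sign. -/
theorem exists_unique_upto_sign_angle
    (d : ℕ) (hd : 0 < d) (m ω : ℝ) (hm : 0 < m) (hω : 0 < ω)
    (x0 p0 : Fin d → ℝ) (K : Set (Fin d → ℝ)) (hK : IsCompact K)
    (s : ℝ) (hs : 0 < s) (hsπ : s < Real.pi) :
    ∀ᶠ r : ℝ in atTop, ∀ x ∈ K,
      (∃ θ : ℂ, ‖θ‖ < s ∧
          Complex.cos θ =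
            (((r : ℂ)) ^ 2)⁻¹ *
              ∑ i, aFun m ω r (tildeX r x0) (tildeP r x0 p0) i * (tildeX r x i : ℂ)) ∧
      (∀ θ θ' : ℂ, ‖θ‖ < s → ‖θ'‖ < s →
          Complex.cos θ =
            (((r : ℂ)) ^ 2)⁻¹ *
              ∑ i, aFun m ω r (tildeX r x0) (tildeP r x0 p0) i * (tildeX r x i : ℂ) →
          Complex.cos θ' =
            (((r : ℂ)) ^ 2)⁻¹ *
              ∑ i, aFun m ω r (tildeX r x0) (tildeP r x0 p0) i * (tildeX r x i : ℂ) →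
          θ' = θ ∨ θ' = -θ) :=
  exists_unique_upto_sign_angle_general d m ω x0 p0 K hK s hs hsπ
end

section
/- For every odd positive integer d and every τ > 0, the function θ ↦ P_d(τ, θ) is an even holomorphic function of θ on the disk {θ ∈ ℂ : |θ| < π} (the apparent singularities at θ = 0, coming from the factor 1/sin θ in the inductive definition, are removable). -/
open Filter Metric

open Topology

/-- `P_d(τ,θ)`, defined inductively by `P₁(τ,θ) = (2πτ)^{-1/2} e^{−θ²/(2τ)}` and
`P_{d+2}(τ,θ) = −(e^{dτ/2}/(2π)) (1/sin θ) ∂P_d/∂θ(τ,θ)`.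
The index `k` corresponds to the odd dimension `d = 2k+1`. -/
noncomputable def Pd : ℕ → ℝ → ℂ → ℂ
  | 0 => fun τ θ => (↑(Real.sqrt (2 * Real.pi * τ)) : ℂ)⁻¹ * Complex.exp (-θ ^ 2 / (2 * (τ : ℂ)))
  | k + 1 => fun τ θ =>
      -((↑(Real.exp ((2 * (k : ℝ) + 1) * τ / 2)) : ℂ) / (2 * (Real.pi : ℂ) * Complex.sin θ)) *
        deriv (Pd k τ) θ

lemma sin_ne_zero_of_mem_ball {θ : ℂ} (hθ : θ ∈ Metric.ball (0 : ℂ) Real.pi) (h0 : θ ≠ 0) :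
    Complex.sin θ ≠ 0 := by
  intro hs
  rw [Complex.sin_eq_zero_iff] at hs
  obtain ⟨n, rfl⟩ := hs
  rw [mem_ball_zero_iff] at hθ
  have hn : ‖((n : ℂ) * (Real.pi : ℂ))‖ = |(n : ℝ)| * Real.pi := by
    rw [norm_mul]
    simp [Real.pi_nonneg, abs_of_nonneg]
  rw [hn] at hθ
  have : |(n : ℝ)| < 1 := by
    by_contra hc
    push_neg at hc
    nlinarith [Real.pi_pos]
  have hn0 : n = 0 := by
    have h1 : |n| < 1 := by exact_mod_cast (by rwa [← Int.cast_abs] at this : ((|n| : ℤ) : ℝ) < 1)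
    exact Int.abs_lt_one_iff.mp h1
  apply h0
  simp [hn0]

/-- An odd holomorphic function on the disk of radius π, divided by `sin`, extends to
an even holomorphic function on that disk. -/
lemma odd_div_sin {h : ℂ → ℂ} (hd : DifferentiableOn ℂ h (Metric.ball (0 : ℂ) Real.pi))
    (hodd : ∀ θ ∈ Metric.ball (0 : ℂ) Real.pi, h (-θ) = -h θ) :
    ∃ q : ℂ → ℂ, DifferentiableOn ℂ q (Metric.ball (0 : ℂ) Real.pi) ∧
      (∀ θ ∈ Metric.ball (0 : ℂ) Real.pi, q (-θ) = q θ) ∧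
      (∀ θ ∈ Metric.ball (0 : ℂ) Real.pi, θ ≠ 0 → q θ = h θ / Complex.sin θ) := by
  have hπ : (0 : ℝ) < Real.pi := Real.pi_pos
  have h0mem : (0 : ℂ) ∈ Metric.ball (0 : ℂ) Real.pi := by simpa using hπ
  have hball : IsOpen (Metric.ball (0 : ℂ) Real.pi) := isOpen_ball
  have h00 : h 0 = 0 := by
    have := hodd 0 h0mem
    simp only [neg_zero] at this
    linear_combination this / 2
  refine ⟨fun θ => if θ = 0 then deriv h 0 else h θ / Complex.sin θ, ?_, ?_, ?_⟩
  · -- differentiability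
    set q : ℂ → ℂ := fun θ => if θ = 0 then deriv h 0 else h θ / Complex.sin θ with hqdef
    have hq_off : ∀ θ : ℂ, θ ≠ 0 → q θ = h θ / Complex.sin θ := fun θ hθ => if_neg hθ
    have hdh : HasDerivAt h (deriv h 0) 0 :=
      (hd.differentiableAt (hball.mem_nhds h0mem)).hasDerivAt
    have t1 : Tendsto (fun θ : ℂ => h θ / θ) (𝓝[≠] (0 : ℂ)) (𝓝 (deriv h 0)) := by
      rw [hasDerivAt_iff_tendsto_slope] at hdh
      refine hdh.congr fun θ => ?_
      simp [slope_def_field, h00]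
    have hds : HasDerivAt Complex.sin (1 : ℂ) 0 := by
      simpa using Complex.hasDerivAt_sin 0
    have t2 : Tendsto (fun θ : ℂ => Complex.sin θ / θ) (𝓝[≠] (0 : ℂ)) (𝓝 1) := by
      rw [hasDerivAt_iff_tendsto_slope] at hds
      refine hds.congr fun θ => ?_
      simp [slope_def_field]
    have t3 : Tendsto (fun θ : ℂ => θ / Complex.sin θ) (𝓝[≠] (0 : ℂ)) (𝓝 1) := by
      have := (t2.inv₀ one_ne_zero)
      simpa [inv_div] using this
    have t : Tendsto (fun θ : ℂ => h θ / Complex.sin θ) (𝓝[≠] (0 : ℂ)) (𝓝 (deriv h 0)) := by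
      have := t1.mul t3
      rw [mul_one] at this
      refine this.congr' ?_
      filter_upwards [eventually_mem_nhdsWithin] with θ (hθ : θ ≠ 0)
      rw [div_mul_div_comm, mul_comm θ (Complex.sin θ), mul_div_mul_right _ _ hθ]
    have hcont : ContinuousAt q 0 := by
      rw [← continuousWithinAt_compl_self]
      have hq0 : q 0 = deriv h 0 := if_pos rfl
      rw [ContinuousWithinAt, hq0]
      refine t.congr' ?_
      filter_upwards [eventually_mem_nhdsWithin] with θ (hθ : θ ≠ 0)
      exact (hq_off θ hθ).symm
    have hdiffq : DifferentiableOn ℂ q (Metric.ball (0 : ℂ) Real.pi \ {0}) := by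
      have : DifferentiableOn ℂ (fun θ => h θ / Complex.sin θ)
          (Metric.ball (0 : ℂ) Real.pi \ {0}) := by
        refine DifferentiableOn.div (hd.mono Set.diff_subset)
          (Complex.differentiable_sin.differentiableOn) ?_
        rintro θ ⟨hθ, hθ0⟩
        exact sin_ne_zero_of_mem_ball hθ (by simpa using hθ0)
      exact this.congr fun θ hθ => hq_off θ (by simpa using hθ.2)
    exact (Complex.differentiableOn_compl_singleton_and_continuousAt_iff
      (hball.mem_nhds h0mem)).mp ⟨hdiffq, hcont⟩
  · -- evenness
    intro θ hθ
    by_cases hθ0 : θ = 0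
    · simp [hθ0]
    · show (if -θ = 0 then deriv h 0 else h (-θ) / Complex.sin (-θ))
          = (if θ = 0 then deriv h 0 else h θ / Complex.sin θ)
      rw [if_neg (neg_ne_zero.mpr hθ0), if_neg hθ0, hodd θ hθ, Complex.sin_neg,
        neg_div_neg_eq]
  · intro θ _ hθ0
    exact if_neg hθ0

/-- part of Lemma 3 of Hall–Mitchell. For every odd `d = 2k+1` and
`τ > 0`, the function `θ ↦ P_d(τ,θ)` is an even holomorphic function on the disk
`|θ| < π`: there is a holomorphic even function `g` on the disk agreeing with
`P_d(τ,·)` away from the (removable) singularity at `θ = 0`. -/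
theorem Pd_even_holomorphic (k : ℕ) (τ : ℝ) (hτ : 0 < τ) :
    ∃ g : ℂ → ℂ,
      DifferentiableOn ℂ g (Metric.ball (0 : ℂ) Real.pi) ∧
      (∀ θ ∈ Metric.ball (0 : ℂ) Real.pi, g (-θ) = g θ) ∧
      (∀ θ ∈ Metric.ball (0 : ℂ) Real.pi, θ ≠ 0 → g θ = Pd k τ θ) := by
  induction k with
  | zero =>
      refine ⟨Pd 0 τ, ?_, ?_, fun θ _ _ => rfl⟩
      · have : Differentiable ℂ (Pd 0 τ) := by
          show Differentiable ℂ fun θ : ℂ =>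
            (↑(Real.sqrt (2 * Real.pi * τ)) : ℂ)⁻¹ * Complex.exp (-θ ^ 2 / (2 * (τ : ℂ)))
          exact (((differentiable_pow 2).neg.div_const _).cexp).const_mul _
        exact this.differentiableOn
      · intro θ _
        show (↑(Real.sqrt (2 * Real.pi * τ)) : ℂ)⁻¹ * Complex.exp (-(-θ) ^ 2 / (2 * (τ : ℂ)))
            = (↑(Real.sqrt (2 * Real.pi * τ)) : ℂ)⁻¹ * Complex.exp (-θ ^ 2 / (2 * (τ : ℂ)))
        rw [neg_sq]
  | succ k ih =>
      obtain ⟨g, hgdiff, hgeven, hgeq⟩ := ih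
      have hball : IsOpen (Metric.ball (0 : ℂ) Real.pi) := isOpen_ball
      have hmemneg : ∀ θ : ℂ, θ ∈ Metric.ball (0 : ℂ) Real.pi →
          -θ ∈ Metric.ball (0 : ℂ) Real.pi := by
        intro θ hθ
        rw [mem_ball_zero_iff] at hθ ⊢
        simpa using hθ
      -- h := deriv g is odd and holomorphic on the ball
      have hhdiff : DifferentiableOn ℂ (deriv g) (Metric.ball (0 : ℂ) Real.pi) :=
        ((hgdiff.analyticOnNhd hball).deriv).differentiableOn
      have hhodd : ∀ θ ∈ Metric.ball (0 : ℂ) Real.pi, deriv g (-θ) = -deriv g θ := by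
        intro θ hθ
        have hgy : DifferentiableAt ℂ g (-θ) :=
          hgdiff.differentiableAt (hball.mem_nhds (hmemneg θ hθ))
        have hcomp : HasDerivAt (fun x => g (-x)) (deriv g (-θ) * -1) θ :=
          HasDerivAt.comp θ hgy.hasDerivAt (hasDerivAt_neg θ)
        have heq : (fun x => g (-x)) =ᶠ[𝓝 θ] g := by
          filter_upwards [hball.mem_nhds hθ] with x hx
          exact hgeven x hx
        have : HasDerivAt g (deriv g (-θ) * -1) θ := hcomp.congr_of_eventuallyEq heq.symm
        have h2 := this.deriv
        linear_combination h2
      obtain ⟨q, hqdiff, hqeven, hqeq⟩ := odd_div_sin hhdiff hhodd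
      set C : ℂ := (↑(Real.exp ((2 * (k : ℝ) + 1) * τ / 2)) : ℂ) with hC
      refine ⟨fun θ => -(C / (2 * (Real.pi : ℂ))) * q θ, ?_, ?_, ?_⟩
      · exact hqdiff.const_mul _
      · intro θ hθ
        exact congrArg _ (hqeven θ hθ)
      · intro θ hθ hθ0
        have hderiv_eq : deriv (Pd k τ) θ = deriv g θ := by
          have hopen : IsOpen (Metric.ball (0 : ℂ) Real.pi \ {0}) :=
            hball.sdiff isClosed_singleton
          have heq : Pd k τ =ᶠ[𝓝 θ] g := by
            filter_upwards [hopen.mem_nhds ⟨hθ, by simpa using hθ0⟩] with x hx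
            exact (hgeq x hx.1 (by simpa using hx.2)).symm
          exact heq.deriv_eq
        show -(C / (2 * (Real.pi : ℂ))) * q θ
            = -(C / (2 * (Real.pi : ℂ) * Complex.sin θ)) * deriv (Pd k τ) θ
        rw [hderiv_eq, hqeq θ hθ hθ0]
        have hs : Complex.sin θ ≠ 0 := sin_ne_zero_of_mem_ball hθ hθ0
        have hπ : (Real.pi : ℂ) ≠ 0 := by
          exact_mod_cast Real.pi_ne_zero
        field_simp
end

section
/- For every odd positive integer d there exist positive constants s_d, B_d, and C_d such that |ρ_τ^d(θ) − P_d(τ,θ)| ≤ B_d e^{−C_d/τ} for all complex θ with |θ| < s_d and all τ with 0 < τ < 1. -/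
open Filter Metric

/-- The analytically continued heat kernel `ρ_τ^d(θ)` on odd-dimensional spheres:
`ρ_τ^1(θ) = (2πτ)^{-1/2} Σ_{n∈ℤ} e^{−(θ−2πn)²/(2τ)}` and
`ρ_τ^{d+2}(θ) = −(e^{dτ/2}/(2π sin θ)) dρ_τ^d/dθ(θ)`.
The index `k` corresponds to the odd dimension `d = 2k+1`. -/
noncomputable def rhoS : ℕ → ℝ → ℂ → ℂ
  | 0 => fun τ θ => (↑(Real.sqrt (2 * Real.pi * τ)) : ℂ)⁻¹ *
      ∑' n : ℤ, Complex.exp (-(θ - 2 * (Real.pi : ℂ) * (n : ℂ)) ^ 2 / (2 * (τ : ℂ)))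
  | k + 1 => fun τ θ =>
      -((↑(Real.exp ((2 * (k : ℝ) + 1) * τ / 2)) : ℂ) / (2 * (Real.pi : ℂ) * Complex.sin θ)) *
        deriv (rhoS k τ) θ

/-!
`ρ¹_τ` is the `2π`-periodisation of the Gaussian `P₁(τ,·)`, so `ρ¹_τ − P₁(τ,·)` is the sum of the
translates `e^{−(θ−2πn)²/(2τ)}` over `n ≠ 0`. For `|θ| < 1/2` each has modulus at most
`e^{−7/τ} e^{−|n|}`, and the prefactor `(2πτ)^{-1/2}` is at most `e^{1/τ}`, so `R₁ = ρ¹ − P₁` is an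
even holomorphic function on the disc of radius `1/2`, bounded by a constant times `e^{−6/τ}`.

`ρ` and `P` obey the same recursion, so off `θ = 0` so does the remainder:
`R_{d+2} = −(e^{dτ/2}/2π) R_d′ / sin θ`. If `R_d` is even, holomorphic and bounded by `M` on the
disc of radius `s`, Cauchy's estimate bounds `R_d′` by `4M/s` on the half disc; `R_d′` is odd, hence
vanishes at `0`, and Schwarz's lemma gives `|R_d′(θ)| ≤ 8M|θ|/s²`. Since `|sin θ| ≥ |θ|/2` there,
`R_d′ / sin θ` has a removable singularity at `0` and extends to an even holomorphic function
bounded by `16M/s²`. Each step halves the radius and enlarges the constant, but keeps the rate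
`e^{−C/τ}`.
-/

open Topology Set Function

lemma Complex.norm_le_two_mul_norm_sin {θ : ℂ} (h : ‖θ‖ ≤ 1 / 2) : ‖θ‖ ≤ 2 * ‖Complex.sin θ‖ := by
  have hbound := Complex.sin_bound (h.trans (by norm_num))
  have htri : ‖θ‖ ≤ ‖Complex.sin θ‖ + ‖θ ^ 3 / 6‖ + ‖Complex.sin θ - (θ - θ ^ 3 / 6)‖ := by
    calc ‖θ‖ = ‖Complex.sin θ + θ ^ 3 / 6 - (Complex.sin θ - (θ - θ ^ 3 / 6))‖ := by ring_nf
      _ ≤ _ := (norm_sub_le _ _).trans (by gcongr; exact norm_add_le _ _)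
  rw [norm_div, norm_pow, Complex.norm_ofNat] at htri
  have h0 := norm_nonneg θ
  nlinarith [pow_le_pow_left₀ h0 h 2, pow_le_pow_left₀ h0 h 4]

lemma Complex.sin_ne_zero_of_norm_le {θ : ℂ} (h : ‖θ‖ ≤ 1 / 2) (h0 : θ ≠ 0) :
    Complex.sin θ ≠ 0 := by
  rw [← norm_pos_iff]
  linarith [norm_pos_iff.2 h0, Complex.norm_le_two_mul_norm_sin h]

lemma Function.Even.deriv_odd {𝕜 F : Type*} [NontriviallyNormedField 𝕜] [NormedAddCommGroup F]
    [NormedSpace 𝕜 F] {f : 𝕜 → F} (hf : f.Even) : (deriv f).Odd := by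
  intro x
  have hcomp : (fun y => f (-y)) = f := funext hf
  simpa only [hcomp, neg_neg] using deriv_comp_neg f (-x)

section EvenHolomorphic

variable {G : ℂ → ℂ} {s M : ℝ}

lemma norm_deriv_le_of_norm_le (hG : DifferentiableOn ℂ G (ball 0 s))
    (hM : ∀ θ ∈ ball (0 : ℂ) s, ‖G θ‖ ≤ M) {z : ℂ} (hz : z ∈ ball (0 : ℂ) (s / 2)) :
    ‖deriv G z‖ ≤ 4 * M / s := by
  have hs : 0 < s := by have := mem_ball_zero_iff.1 hz; linarith [norm_nonneg z]
  have hsub : ball z (s / 2) ⊆ ball 0 s := by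
    intro w hw
    rw [mem_ball] at hw hz ⊢
    linarith [dist_triangle w z 0]
  have hmaps : MapsTo G (ball z (s / 2)) (closedBall (G z) (2 * M)) := by
    intro w hw
    rw [mem_closedBall, dist_eq_norm]
    linarith [norm_sub_le (G w) (G z), hM w (hsub hw), hM z (hsub (mem_ball_self (by linarith)))]
  calc ‖deriv G z‖ ≤ 2 * M / (s / 2) :=
        Complex.norm_deriv_le_div_of_mapsTo_ball (hG.mono hsub) hmaps (by linarith)
    _ = 4 * M / s := by ring

lemma norm_deriv_le_of_even (hG : DifferentiableOn ℂ G (ball 0 s)) (heven : G.Even)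
    (hM : ∀ θ ∈ ball (0 : ℂ) s, ‖G θ‖ ≤ M) {z : ℂ} (hz : z ∈ ball (0 : ℂ) (s / 2)) :
    ‖deriv G z‖ ≤ 8 * M / s ^ 2 * ‖z‖ := by
  have hs : 0 < s := by have := mem_ball_zero_iff.1 hz; linarith [norm_nonneg z]
  have hF0 : deriv G 0 = 0 := heven.deriv_odd.map_zero
  have hmaps : MapsTo (deriv G) (ball 0 (s / 2)) (closedBall (deriv G 0) (4 * M / s)) := by
    intro w hw
    rw [hF0, mem_closedBall, dist_zero_right]
    exact norm_deriv_le_of_norm_le hG hM hw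
  have hschwarz := Complex.dist_le_div_mul_dist_of_mapsTo_ball
    ((hG.deriv isOpen_ball).mono (ball_subset_ball (by linarith))) hmaps hz
  rw [hF0, dist_zero_right, dist_zero_right] at hschwarz
  exact hschwarz.trans_eq (by field_simp; ring)

end EvenHolomorphic

lemma norm_le_of_continuousAt_of_forall_mem_ball_ne {E : Type*} [NormedAddCommGroup E] {H : ℂ → E}
    {r A : ℝ} (hr : 0 < r) (hH : ContinuousAt H 0)
    (hle : ∀ θ ∈ ball (0 : ℂ) r, θ ≠ 0 → ‖H θ‖ ≤ A) : ∀ θ ∈ ball (0 : ℂ) r, ‖H θ‖ ≤ A := by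
  intro θ hθ
  rcases eq_or_ne θ 0 with rfl | hθ0
  · refine le_of_tendsto (hH.norm.tendsto.mono_left (nhdsWithin_le_nhds (s := {0}ᶜ))) ?_
    filter_upwards [sdiff_mem_nhdsWithin_compl (ball_mem_nhds (0 : ℂ) hr) {0}] with z hz
      using hle z hz.1 hz.2
  · exact hle θ hθ hθ0

lemma exists_even_differentiableOn_eq_deriv_div_sin {G : ℂ → ℂ} {s M : ℝ} (hs : 0 < s)
    (hs1 : s ≤ 1) (hG : DifferentiableOn ℂ G (ball 0 s)) (heven : G.Even)
    (hM : ∀ θ ∈ ball (0 : ℂ) s, ‖G θ‖ ≤ M) :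
    ∃ H : ℂ → ℂ, DifferentiableOn ℂ H (ball 0 (s / 2)) ∧ H.Even ∧
      (∀ θ ∈ ball (0 : ℂ) (s / 2), ‖H θ‖ ≤ 16 * M / s ^ 2) ∧
      ∀ θ ≠ 0, H θ = deriv G θ / Complex.sin θ := by
  set f : ℂ → ℂ := fun θ => deriv G θ / Complex.sin θ
  have hsin : ∀ θ ∈ ball (0 : ℂ) (s / 2), ‖θ‖ ≤ 2 * ‖Complex.sin θ‖ := fun θ hθ =>
    Complex.norm_le_two_mul_norm_sin (by linarith [mem_ball_zero_iff.1 hθ])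
  have hf_le : ∀ θ ∈ ball (0 : ℂ) (s / 2) \ {0}, ‖f θ‖ ≤ 16 * M / s ^ 2 := by
    rintro θ ⟨hθ, hθ0 : θ ≠ 0⟩
    have hθpos : 0 < ‖θ‖ := norm_pos_iff.2 hθ0
    have hM0 : 0 ≤ M := (norm_nonneg _).trans (hM 0 (mem_ball_self hs))
    rw [norm_div, div_le_iff₀ (by linarith [hsin θ hθ])]
    calc ‖deriv G θ‖ ≤ 8 * M / s ^ 2 * ‖θ‖ := norm_deriv_le_of_even hG heven hM hθ
      _ ≤ 8 * M / s ^ 2 * (2 * ‖Complex.sin θ‖) := by gcongr; exact hsin θ hθ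
      _ = 16 * M / s ^ 2 * ‖Complex.sin θ‖ := by ring
  have hf_diff : DifferentiableOn ℂ f (ball (0 : ℂ) (s / 2) \ {0}) := by
    rintro θ ⟨hθ, hθ0 : θ ≠ 0⟩
    have hsin0 : Complex.sin θ ≠ 0 :=
      Complex.sin_ne_zero_of_norm_le (by linarith [mem_ball_zero_iff.1 hθ]) hθ0
    refine DifferentiableWithinAt.div ?_ (Complex.differentiable_sin θ).differentiableWithinAt hsin0
    exact (hG.deriv isOpen_ball).mono (sdiff_subset.trans (ball_subset_ball (by linarith))) θ
      ⟨hθ, hθ0⟩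
  set H := update f 0 (limUnder (𝓝[≠] 0) f)
  have hH_diff : DifferentiableOn ℂ H (ball 0 (s / 2)) :=
    Complex.differentiableOn_update_limUnder_of_bddAbove (ball_mem_nhds _ (by linarith)) hf_diff
      ⟨_, forall_mem_image.2 hf_le⟩
  have hH_eq : ∀ θ ≠ 0, H θ = f θ := fun θ hθ => update_of_ne hθ _ _
  refine ⟨H, hH_diff, ?_, ?_, hH_eq⟩
  · intro θ
    rcases eq_or_ne θ 0 with rfl | hθ0
    · rw [neg_zero]
    · rw [hH_eq _ hθ0, hH_eq _ (neg_ne_zero.2 hθ0)]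
      simp only [f, heven.deriv_odd θ, Complex.sin_neg, neg_div_neg_eq]
  · refine norm_le_of_continuousAt_of_forall_mem_ball_ne (by linarith)
      (hH_diff.continuousOn.continuousAt (ball_mem_nhds _ (by linarith))) fun θ hθ hθ0 => ?_
    rw [hH_eq θ hθ0]
    exact hf_le θ ⟨hθ, hθ0⟩

lemma Real.inv_sqrt_two_pi_mul_le_exp_inv {τ : ℝ} (hτ : 0 < τ) :
    (Real.sqrt (2 * Real.pi * τ))⁻¹ ≤ Real.exp τ⁻¹ := by
  set r := Real.sqrt (2 * Real.pi * τ)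
  have hr : 0 < r := Real.sqrt_pos.2 (by positivity)
  have hr2 : r ^ 2 = 2 * Real.pi * τ := Real.sq_sqrt (by positivity)
  have hexp : 1 + τ⁻¹ ≤ Real.exp τ⁻¹ := by linarith [Real.add_one_le_exp τ⁻¹]
  -- `r (1 + 1/τ) = r + 2π/r ≥ 1`
  have key : 1 ≤ r * (1 + τ⁻¹) := by
    have : r * τ⁻¹ = 2 * Real.pi / r := by field_simp; linarith
    rw [mul_add, mul_one, this]
    rcases le_total 1 r with h | h
    · linarith [div_pos Real.two_pi_pos hr]
    · linarith [(one_le_div hr).2 (h.trans (by linarith [Real.pi_gt_three]) : r ≤ 2 * Real.pi)]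
  rw [inv_le_iff_one_le_mul₀ hr, mul_comm]
  exact key.trans (mul_le_mul_of_nonneg_left hexp hr.le)

lemma summable_exp_neg_abs_int : Summable fun n : ℤ => Real.exp (-|(n : ℝ)|) :=
  Summable.of_nat_of_neg (by simpa using Real.summable_exp_neg_nat)
    (by simpa using Real.summable_exp_neg_nat)

lemma le_re_sq_sub_two_pi_mul_int {θ : ℂ} (hθ : ‖θ‖ ≤ 1 / 2) {n : ℤ} (hn : n ≠ 0) :
    14 + 2 * |(n : ℝ)| ≤ ((θ - 2 * Real.pi * n) ^ 2).re := by
  have hre : ((θ - 2 * Real.pi * n) ^ 2).re = (θ.re - 2 * Real.pi * n) ^ 2 - θ.im ^ 2 := by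
    simp [sq]
  have ha : θ.re ^ 2 ≤ 1 / 4 := by
    nlinarith [sq_abs θ.re, Complex.abs_re_le_norm θ, abs_nonneg θ.re]
  have hb : θ.im ^ 2 ≤ 1 / 4 := by
    nlinarith [sq_abs θ.im, Complex.abs_im_le_norm θ, abs_nonneg θ.im]
  have hn1 : 1 ≤ |(n : ℝ)| := by rw [← Int.cast_abs]; exact_mod_cast Int.one_le_abs hn
  have hπ := Real.pi_gt_three
  -- `(x - y)² ≥ x²/2 - y²` with `x = 2πn`, `y = re θ`
  have hsq : 2 * Real.pi ^ 2 * n ^ 2 - θ.re ^ 2 ≤ (θ.re - 2 * Real.pi * n) ^ 2 := by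
    nlinarith [sq_nonneg (2 * Real.pi * n - 2 * θ.re)]
  have hπ2 : 18 * (n : ℝ) ^ 2 ≤ 2 * Real.pi ^ 2 * n ^ 2 := by
    have : (9 : ℝ) ≤ Real.pi ^ 2 := by nlinarith
    nlinarith [sq_nonneg (n : ℝ)]
  rw [← sq_abs (n : ℝ)] at hπ2 hsq
  rw [hre]
  nlinarith

noncomputable def heatTerm (τ : ℝ) (θ : ℂ) (n : ℤ) : ℂ :=
  Complex.exp (-(θ - 2 * (Real.pi : ℂ) * (n : ℂ)) ^ 2 / (2 * (τ : ℂ)))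

lemma norm_heatTerm_le {τ : ℝ} (hτ : 0 < τ) (hτ1 : τ ≤ 1) {θ : ℂ} (hθ : ‖θ‖ ≤ 1 / 2) {n : ℤ}
    (hn : n ≠ 0) : ‖heatTerm τ θ n‖ ≤ Real.exp (-7 / τ) * Real.exp (-|(n : ℝ)|) := by
  have hre := le_re_sq_sub_two_pi_mul_int hθ hn
  have hn0 : 0 ≤ |(n : ℝ)| := abs_nonneg _
  rw [heatTerm, Complex.norm_exp, ← Real.exp_add, Real.exp_le_exp,
    show (2 * (τ : ℂ)) = ((2 * τ : ℝ) : ℂ) by push_cast; ring, Complex.div_ofReal_re,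
    Complex.neg_re, div_le_iff₀ (by positivity),
    show (-7 / τ + -|(n : ℝ)|) * (2 * τ) = -14 - 2 * τ * |(n : ℝ)| by field_simp; ring]
  nlinarith [mul_le_mul_of_nonneg_right hτ1 hn0]

lemma norm_ite_heatTerm_le {τ : ℝ} (hτ : 0 < τ) (hτ1 : τ ≤ 1) {θ : ℂ} (hθ : ‖θ‖ ≤ 1 / 2) (n : ℤ) :
    ‖if n = 0 then 0 else heatTerm τ θ n‖ ≤ Real.exp (-7 / τ) * Real.exp (-|(n : ℝ)|) := by
  split_ifs with hn
  · rw [norm_zero]; positivity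
  · exact norm_heatTerm_le hτ hτ1 hθ hn

lemma rhoS_zero_sub_Pd_zero {τ : ℝ} {θ : ℂ} (hsum : Summable (update (heatTerm τ θ) 0 0)) :
    rhoS 0 τ θ - Pd 0 τ θ = (↑(Real.sqrt (2 * Real.pi * τ)) : ℂ)⁻¹ *
      ∑' n : ℤ, if n = 0 then 0 else heatTerm τ θ n := by
  change _ * ∑' n, heatTerm τ θ n - _ * Complex.exp (-θ ^ 2 / (2 * (τ : ℂ))) = _
  rw [hsum.tsum_eq_add_tsum_ite' 0]
  simp only [heatTerm, Int.cast_zero, mul_zero, sub_zero]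
  ring

lemma rhoS_zero_even (τ : ℝ) : (rhoS 0 τ).Even := by
  intro θ
  simp only [rhoS]
  rw [← (Equiv.neg ℤ).tsum_eq]
  congr 2 with n
  simp only [Equiv.neg_apply, Int.cast_neg]
  ring_nf

lemma Pd_zero_even (τ : ℝ) : (Pd 0 τ).Even := by
  intro θ
  simp only [Pd, neg_sq]

lemma differentiableOn_Pd (k : ℕ) (τ : ℝ) :
    DifferentiableOn ℂ (Pd k τ) {θ | Complex.sin θ ≠ 0} := by
  have hopen : IsOpen {θ : ℂ | Complex.sin θ ≠ 0} :=
    isOpen_ne_fun Complex.continuous_sin continuous_const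
  induction k with
  | zero =>
    refine (Differentiable.const_mul ?_ _).differentiableOn
    exact (differentiable_id.pow 2).neg.div_const _ |>.cexp
  | succ k ih =>
    intro θ hθ
    refine DifferentiableWithinAt.mul (DifferentiableWithinAt.neg ?_) (ih.deriv hopen θ hθ)
    refine (differentiableWithinAt_const _).div ?_ (mul_ne_zero (by simp [Real.pi_ne_zero]) hθ)
    exact ((Complex.differentiable_sin θ).const_mul _).differentiableWithinAt

lemma rhoS_succ_sub_Pd_succ {k : ℕ} {τ : ℝ} {θ : ℂ} {G : ℂ → ℂ} (hθ : Complex.sin θ ≠ 0)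
    (hG : DifferentiableAt ℂ G θ) (hρ : rhoS k τ =ᶠ[𝓝 θ] Pd k τ + G) :
    rhoS (k + 1) τ θ - Pd (k + 1) τ θ =
      -((↑(Real.exp ((2 * (k : ℝ) + 1) * τ / 2)) : ℂ) / (2 * (Real.pi : ℂ))) *
        (deriv G θ / Complex.sin θ) := by
  have hPd : DifferentiableAt ℂ (Pd k τ) θ :=
    (differentiableOn_Pd k τ).differentiableAt
      ((isOpen_ne_fun Complex.continuous_sin continuous_const).mem_nhds hθ)
  have hderiv : deriv (rhoS k τ) θ = deriv (Pd k τ) θ + deriv G θ := by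
    rw [hρ.deriv_eq]; exact deriv_add hPd hG
  simp only [rhoS, Pd, hderiv]
  field_simp
  ring

lemma rhoS_succ_sub_Pd_succ_zero (k : ℕ) (τ : ℝ) : rhoS (k + 1) τ 0 - Pd (k + 1) τ 0 = 0 := by
  simp [rhoS, Pd]

/-- For `d ≥ 3` the remainder at `θ = 0` is a junk value (`sin 0 = 0`), so it is only required
to agree with the holomorphic function `G` off `0`. -/
def RemainderBound (k : ℕ) (s B C : ℝ) : Prop :=
  ∀ τ : ℝ, 0 < τ → τ < 1 → ∃ G : ℂ → ℂ, DifferentiableOn ℂ G (ball 0 s) ∧ G.Even ∧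
    (∀ θ ∈ ball (0 : ℂ) s, ‖G θ‖ ≤ B * Real.exp (-C / τ)) ∧
    (∀ θ ∈ ball (0 : ℂ) s, θ ≠ 0 → rhoS k τ θ - Pd k τ θ = G θ) ∧
    ‖rhoS k τ 0 - Pd k τ 0‖ ≤ B * Real.exp (-C / τ)

theorem remainderBound_zero : RemainderBound 0 (1 / 2) (∑' n : ℤ, Real.exp (-|(n : ℝ)|)) 6 := by
  intro τ hτ hτ1
  set c : ℂ := (↑(Real.sqrt (2 * Real.pi * τ)) : ℂ)⁻¹
  set tail : ℂ → ℂ := fun θ => ∑' n : ℤ, if n = 0 then 0 else heatTerm τ θ n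
  have hterm : ∀ n : ℤ, ∀ θ ∈ ball (0 : ℂ) (1 / 2),
      ‖if n = 0 then 0 else heatTerm τ θ n‖ ≤ Real.exp (-7 / τ) * Real.exp (-|(n : ℝ)|) :=
    fun n θ hθ => norm_ite_heatTerm_le hτ hτ1.le (mem_ball_zero_iff.1 hθ).le n
  have hmajorant := summable_exp_neg_abs_int.mul_left (Real.exp (-7 / τ))
  have hsplit : ∀ θ ∈ ball (0 : ℂ) (1 / 2), rhoS 0 τ θ - Pd 0 τ θ = c * tail θ := fun θ hθ =>
    rhoS_zero_sub_Pd_zero <| .of_norm_bounded hmajorant fun n => by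
      simpa only [update_apply] using hterm n θ hθ
  have hbound : ∀ θ ∈ ball (0 : ℂ) (1 / 2), ‖rhoS 0 τ θ - Pd 0 τ θ‖ ≤
      (∑' n : ℤ, Real.exp (-|(n : ℝ)|)) * Real.exp (-6 / τ) := by
    intro θ hθ
    have htail : ‖tail θ‖ ≤ Real.exp (-7 / τ) * ∑' n : ℤ, Real.exp (-|(n : ℝ)|) :=
      tsum_of_norm_bounded (summable_exp_neg_abs_int.hasSum.mul_left _) fun n => hterm n θ hθ
    have hc : ‖c‖ ≤ Real.exp τ⁻¹ := by
      simpa [c, abs_of_nonneg (Real.sqrt_nonneg _)] using Real.inv_sqrt_two_pi_mul_le_exp_inv hτ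
    rw [hsplit θ hθ, norm_mul]
    calc ‖c‖ * ‖tail θ‖ ≤ Real.exp τ⁻¹ * (Real.exp (-7 / τ) * ∑' n : ℤ, Real.exp (-|(n : ℝ)|)) := by
          gcongr
      _ = (∑' n : ℤ, Real.exp (-|(n : ℝ)|)) * Real.exp (-6 / τ) := by
          rw [← mul_assoc, ← Real.exp_add, mul_comm]
          congr 2
          ring
  have htail_diff : DifferentiableOn ℂ tail (ball 0 (1 / 2)) := by
    refine Complex.differentiableOn_tsum_of_summable_norm hmajorant (fun n => ?_) isOpen_ball hterm
    split_ifs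
    · exact differentiableOn_const 0
    · exact ((((differentiable_id.sub_const _).pow 2).neg.div_const _).cexp).differentiableOn
  refine ⟨fun θ => rhoS 0 τ θ - Pd 0 τ θ, ?_, ?_, hbound, fun _ _ _ => rfl,
    hbound 0 (mem_ball_self (by norm_num))⟩
  · exact (htail_diff.const_mul c).congr hsplit
  · intro θ
    simp only [rhoS_zero_even τ θ, Pd_zero_even τ θ]

theorem RemainderBound.succ {k : ℕ} {s B C : ℝ} (h : RemainderBound k s B C) (hs : 0 < s)
    (hs1 : s ≤ 1) (hB : 0 < B) :
    RemainderBound (k + 1) (s / 2) (Real.exp ((k : ℝ) + 1) * (16 * B / s ^ 2)) C := by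
  intro τ hτ hτ1
  obtain ⟨G, hG, heven, hGle, hGeq, -⟩ := h τ hτ hτ1
  obtain ⟨H, hH, hHeven, hHle, hHeq⟩ :=
    exists_even_differentiableOn_eq_deriv_div_sin hs hs1 hG heven hGle
  set a : ℂ := -((↑(Real.exp ((2 * (k : ℝ) + 1) * τ / 2)) : ℂ) / (2 * (Real.pi : ℂ)))
  have ha : ‖a‖ ≤ Real.exp ((k : ℝ) + 1) := by
    have h2π : 1 ≤ 2 * Real.pi := by linarith [Real.pi_gt_three]
    rw [norm_neg, norm_div, Complex.norm_real, Real.norm_of_nonneg (Real.exp_pos _).le,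
      show ‖2 * (Real.pi : ℂ)‖ = 2 * Real.pi by simp [Real.pi_pos.le], div_le_iff₀ (by positivity)]
    calc Real.exp ((2 * k + 1) * τ / 2) ≤ Real.exp ((k : ℝ) + 1) := by
          gcongr; nlinarith [(k.cast_nonneg : (0 : ℝ) ≤ k)]
      _ ≤ _ := le_mul_of_one_le_right (Real.exp_pos _).le h2π
  refine ⟨fun θ => a * H θ, hH.const_mul a, fun θ => by simp only [hHeven θ], ?_, ?_, ?_⟩
  · intro θ hθ
    rw [norm_mul, mul_assoc]
    exact mul_le_mul ha (hHle θ hθ |>.trans_eq (by ring)) (norm_nonneg _) (Real.exp_pos _).le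
  · intro θ hθ hθ0
    have hθs : θ ∈ ball (0 : ℂ) s := ball_subset_ball (by linarith) hθ
    have hsin : Complex.sin θ ≠ 0 :=
      Complex.sin_ne_zero_of_norm_le (by linarith [mem_ball_zero_iff.1 hθ]) hθ0
    have hρ : rhoS k τ =ᶠ[𝓝 θ] Pd k τ + G := by
      filter_upwards [isOpen_ball.mem_nhds hθs, isOpen_ne.mem_nhds hθ0] with z hz hz0
      rw [Pi.add_apply, ← hGeq z hz hz0, add_sub_cancel]
    rw [rhoS_succ_sub_Pd_succ hsin (hG.differentiableAt (isOpen_ball.mem_nhds hθs)) hρ]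
    beta_reduce
    rw [hHeq θ hθ0]
  · rw [rhoS_succ_sub_Pd_succ_zero, norm_zero]
    positivity

theorem exists_remainderBound (k : ℕ) :
    ∃ s B C : ℝ, 0 < s ∧ s ≤ 1 ∧ 0 < B ∧ 0 < C ∧ RemainderBound k s B C := by
  induction k with
  | zero =>
    refine ⟨1 / 2, _, 6, by norm_num, by norm_num, ?_, by norm_num, remainderBound_zero⟩
    exact summable_exp_neg_abs_int.tsum_pos (fun _ => (Real.exp_pos _).le) 0 (Real.exp_pos _)
  | succ k ih =>
    obtain ⟨s, B, C, hs, hs1, hB, hC, h⟩ := ih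
    exact ⟨s / 2, _, C, by linarith, by linarith, by positivity, hC, h.succ hs hs1 hB⟩

/-- Lemma 3 of Hall–Mitchell. For every odd dimension `d = 2k+1`
there are positive constants `s_d, B_d, C_d` such that the remainder
`R_d(τ,θ) = ρ_τ^d(θ) − P_d(τ,θ)` satisfies `|R_d(τ,θ)| ≤ B_d e^{−C_d/τ}` for all
`|θ| < s_d` and all `0 < τ < 1`. -/
theorem remainder_exponentially_small (k : ℕ) :
    ∃ s B C : ℝ, 0 < s ∧ 0 < B ∧ 0 < C ∧
      ∀ τ : ℝ, 0 < τ → τ < 1 →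
        ∀ θ : ℂ, ‖θ‖ < s →
          ‖rhoS k τ θ - Pd k τ θ‖ ≤ B * Real.exp (-C / τ) := by
  obtain ⟨s, B, C, hs, -, hB, hC, h⟩ := exists_remainderBound k
  refine ⟨s, B, C, hs, hB, hC, fun τ hτ hτ1 θ hθ => ?_⟩
  obtain ⟨G, -, -, hGle, hGeq, hzero⟩ := h τ hτ hτ1
  rcases eq_or_ne θ 0 with rfl | hθ0
  · exact hzero
  · rw [hGeq θ (mem_ball_zero_iff.2 hθ) hθ0]
    exact hGle θ (mem_ball_zero_iff.2 hθ)
end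

section
/- There exists a constant B > 0 such that for all τ with 0 < τ < 1 and all complex θ with |θ| < π/2, one has |(2πτ)^{-1/2} Σ_{n∈ℤ, n≠0} e^{−(θ−2πn)²/(2τ)}| ≤ B e^{−π²/(2τ)}. -/
/-!
For `|θ| < π/2` and `n ≠ 0` the real part of `-(θ - 2πn)²` is at most `-2π²|n|`, so the `n`-th
term is bounded by `q ^ |n|` with `q = e^{-π²/τ}`, and `q ≤ 1/2` once `τ < 1`. The two geometric
tails sum to `2q/(1-q) ≤ 4q`; writing `q = e^{-π²/(2τ)} · e^{-π²/(2τ)}`, one of the two factors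
absorbs the prefactor `(2πτ)^{-1/2}`.
-/

open Real

theorem hasSum_pow_natAbs {K : Type*} [NormedField K] [CompleteSpace K] {ξ : K} (h : ‖ξ‖ < 1) :
    HasSum (fun n : ℤ => ξ ^ n.natAbs) ((1 + ξ) / (1 - ξ)) := by
  have hξ : 1 - ξ ≠ 0 := sub_ne_zero.mpr <| by rintro rfl; simp at h
  have hgeom := hasSum_geometric_of_norm_lt_one h
  have hneg : HasSum (fun n : ℕ => ξ ^ (-((n : ℤ) + 1)).natAbs) (ξ * (1 - ξ)⁻¹) := by
    simp_rw [show ∀ n : ℕ, (-((n : ℤ) + 1)).natAbs = n + 1 by omega, pow_succ']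
    exact hgeom.mul_left ξ
  rw [show (1 + ξ) / (1 - ξ) = (1 - ξ)⁻¹ + ξ * (1 - ξ)⁻¹ by field_simp]
  exact HasSum.of_nat_of_neg_add_one (by simpa using hgeom) hneg

theorem hasSum_pow_natAbs_ne_zero {K : Type*} [NormedField K] [CompleteSpace K] {ξ : K}
    (h : ‖ξ‖ < 1) :
    HasSum (fun n : {n : ℤ // n ≠ 0} => ξ ^ (n : ℤ).natAbs) (2 * ξ / (1 - ξ)) := by
  have hξ : 1 - ξ ≠ 0 := sub_ne_zero.mpr <| by rintro rfl; simp at h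
  have hzero := hasSum_singleton (0 : ℤ) fun n : ℤ => ξ ^ n.natAbs
  rw [Set.domRestrict_eq, Int.natAbs_zero, pow_zero] at hzero
  have hall : HasSum (fun n : ℤ => ξ ^ n.natAbs) (1 + 2 * ξ / (1 - ξ)) := by
    rw [show 1 + 2 * ξ / (1 - ξ) = (1 + ξ) / (1 - ξ) by field_simp; ring]
    exact hasSum_pow_natAbs h
  exact hzero.hasSum_compl_iff.mpr hall

theorem sq_sub_sq_sub_two_mul_le {L a b : ℝ} (ha : |a| ≤ L / 2) (hb : |b| ≤ L / 2) {n : ℤ}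
    (hn : n ≠ 0) : b ^ 2 - (a - 2 * L * n) ^ 2 ≤ -(2 * L ^ 2 * |(n : ℝ)|) := by
  have hL : 0 ≤ L := by linarith [abs_nonneg a]
  have hn1 : (1 : ℝ) ≤ |(n : ℝ)| := by exact_mod_cast Int.one_le_abs hn
  have hdist : 2 * L * |(n : ℝ)| - L / 2 ≤ |a - 2 * L * n| :=
    calc 2 * L * |(n : ℝ)| - L / 2 ≤ |2 * L * n| - |a| := by
          rw [abs_mul, abs_of_nonneg (by positivity : 0 ≤ 2 * L)]; linarith
      _ ≤ |a - 2 * L * n| := by rw [abs_sub_comm]; exact abs_sub_abs_le_abs_sub _ _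
  have hb2 : b ^ 2 ≤ (L / 2) ^ 2 := sq_le_sq' (abs_le.mp hb).1 (abs_le.mp hb).2
  have hdist2 : (2 * L * |(n : ℝ)| - L / 2) ^ 2 ≤ (a - 2 * L * n) ^ 2 := by
    rw [← sq_abs (a - _)]
    exact pow_le_pow_left₀ (by nlinarith) hdist 2
  nlinarith [mul_nonneg (mul_nonneg (sq_nonneg L) (sub_nonneg.mpr hn1)) (abs_nonneg (n : ℝ))]

theorem norm_cexp_neg_sq_div_le {τ : ℝ} (hτ : 0 < τ) {θ : ℂ} (hθ : ‖θ‖ ≤ π / 2) {n : ℤ}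
    (hn : n ≠ 0) :
    ‖Complex.exp (-(θ - 2 * (π : ℂ) * n) ^ 2 / (2 * (τ : ℂ)))‖ ≤ rexp (-π ^ 2 / τ) ^ n.natAbs := by
  have hre : (-(θ - 2 * (π : ℂ) * n) ^ 2 / (2 * (τ : ℂ))).re
      = (θ.im ^ 2 - (θ.re - 2 * π * n) ^ 2) / (2 * τ) := by
    rw [show (2 * (τ : ℂ)) = ((2 * τ : ℝ) : ℂ) by push_cast; ring, Complex.div_ofReal_re]
    simp [sq]
  rw [Complex.norm_exp, hre, ← exp_nat_mul, Nat.cast_natAbs, Int.cast_abs, exp_le_exp,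
    div_le_iff₀ (by positivity)]
  calc θ.im ^ 2 - (θ.re - 2 * π * n) ^ 2 ≤ -(2 * π ^ 2 * |(n : ℝ)|) :=
        sq_sub_sq_sub_two_mul_le ((Complex.abs_re_le_norm θ).trans hθ)
          ((Complex.abs_im_le_norm θ).trans hθ) hn
    _ = |(n : ℝ)| * (-π ^ 2 / τ) * (2 * τ) := by field_simp

theorem exp_neg_pi_sq_div_two_mul_le_sqrt {τ : ℝ} (hτ : 0 < τ) :
    rexp (-π ^ 2 / (2 * τ)) ≤ √(2 * π * τ) := by
  have hπ : 1 ≤ π := by linarith [pi_gt_three]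
  have hexp : π ^ 2 / τ * rexp (-(π ^ 2 / τ)) ≤ 1 :=
    (mul_exp_neg_le_exp_neg_one _).trans (exp_le_one_iff.mpr (by norm_num))
  rw [div_mul_eq_mul_div, div_le_iff₀ hτ, one_mul] at hexp
  rw [le_sqrt (exp_nonneg _) (by positivity), ← exp_nat_mul]
  calc rexp (((2 : ℕ) : ℝ) * (-π ^ 2 / (2 * τ))) = rexp (-(π ^ 2 / τ)) := by
        congr 1; push_cast; field_simp
    _ ≤ π ^ 2 * rexp (-(π ^ 2 / τ)) := le_mul_of_one_le_left (exp_nonneg _) (one_le_pow₀ hπ)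
    _ ≤ τ := hexp
    _ ≤ 2 * π * τ := le_mul_of_one_le_left hτ.le (by linarith)

/-- the `d = 1` remainder bound in Lemma 3 of Hall–Mitchell.
There is `B > 0` such that for all `0 < τ < 1` and all complex `θ` with `|θ| < π/2`,
`|(2πτ)^{-1/2} Σ_{n≠0} e^{−(θ−2πn)²/(2τ)}| ≤ B e^{−π²/(2τ)}`. -/
theorem R1_exponentially_small :
    ∃ B : ℝ, 0 < B ∧
      ∀ τ : ℝ, 0 < τ → τ < 1 →
        ∀ θ : ℂ, ‖θ‖ < Real.pi / 2 →
          ‖((↑(Real.sqrt (2 * Real.pi * τ)) : ℂ)⁻¹ *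
                ∑' n : {n : ℤ // n ≠ 0},
                  Complex.exp (-(θ - 2 * (Real.pi : ℂ) * ((n : ℤ) : ℂ)) ^ 2 / (2 * (τ : ℂ))))‖ ≤
            B * Real.exp (-Real.pi ^ 2 / (2 * τ)) := by
  refine ⟨4, by norm_num, fun τ hτ hτ1 θ hθ => ?_⟩
  set E := rexp (-π ^ 2 / (2 * τ))
  set q := rexp (-π ^ 2 / τ)
  have hqE : q = E * E := by simp only [q, E, ← exp_add]; congr 1; field_simp; ring
  have hq : q ≤ 1 / 2 := by
    refine (exp_le_exp.mpr ?_).trans exp_neg_one_lt_half.le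
    rw [div_le_iff₀ hτ]
    nlinarith [pi_gt_three]
  have hq0 : 0 ≤ q := exp_nonneg _
  have hterms := tsum_of_norm_bounded
    (hasSum_pow_natAbs_ne_zero (by rw [norm_of_nonneg hq0]; linarith))
    fun n => norm_cexp_neg_sq_div_le hτ hθ.le n.2
  have hsqrt : 0 < √(2 * π * τ) := sqrt_pos.mpr (by positivity)
  rw [norm_mul, norm_inv, Complex.norm_real, norm_of_nonneg hsqrt.le]
  calc (√(2 * π * τ))⁻¹ * ‖∑' n : {n : ℤ // n ≠ 0}, _‖ ≤ (√(2 * π * τ))⁻¹ * (2 * q / (1 - q)) := by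
        gcongr
    _ ≤ (√(2 * π * τ))⁻¹ * (4 * q) := by
        gcongr
        rw [div_le_iff₀ (by linarith)]
        nlinarith
    _ = 4 * E * (E / √(2 * π * τ)) := by rw [hqE]; ring
    _ ≤ 4 * E * 1 := by
        gcongr
        exact (div_le_one hsqrt).mpr (exp_neg_pi_sq_div_two_mul_le_sqrt hτ)
    _ = 4 * E := mul_one _
end

section
/- Fix constants m, ω > 0, a positive integer d, and points x₀, p₀ ∈ ℝ^d, and set z = x₀ + i p₀/(mω) ∈ ℂ^d. For r > 0 with r² > x₀², let a(r) = a(x̃₀, p̃₀) ∈ ℂ^{d+1}. Then as r → ∞, the first d components of a(r) converge to z (i.e., lim_{r→∞} a(r)_k = z_k for k = 1, …, d), and the last component satisfies lim_{r→∞} (a(r)_{d+1} − r) = 0. -/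
/-!
With `t = |p| / (m ω r)` one has `a(x, p) = cosh t · x + i (sinh t / t) / (m ω) · p`. Along
`(x̃₀, p̃₀)` the momentum `p̃₀ → (p₀, 0)` stays bounded, so `t r` stays bounded and `t → 0`;
hence `cosh t → 1` and `sinh t / t → 1`, giving the first `d` components. In the last one,
`x̃₀` has size `√(r² − x₀²) ≈ r`, and `(cosh t − 1) r = ((cosh t − 1) / t) (t r) → cosh' 0 · c = 0`,
while `√(r² − x₀²) − r → 0` and the last entry of `p̃₀` tends to `0`.
-/

open Filter Metric

/-- `z = x₀ + i p₀ / (mω)`. -/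
noncomputable def zOf {d : ℕ} (m ω : ℝ) (x0 p0 : Fin d → ℝ) : Fin d → ℂ :=
  fun i => (x0 i : ℂ) + Complex.I * (p0 i : ℂ) / (m * ω : ℝ)

open Topology

/-- The angle `j / (m ω r²)` of `a(x, p)`, where `j = r |p|`. -/
noncomputable def aAngle {n : ℕ} (m ω r : ℝ) (p : Fin n → ℝ) : ℝ :=
  √(∑ j, p j ^ 2) / (m * ω * r)

/-- Writing the `sinh` coefficient as `dslope sinh 0` (which is `1` at `0`) makes the formula
hold also for `p = 0` and the coefficient continuous in the angle. -/
theorem aFun_apply_eq {n : ℕ} (m ω : ℝ) {r : ℝ} (hr : r ≠ 0) (x p : Fin n → ℝ) (i : Fin n) :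
    aFun m ω r x p i = ((Real.cosh (aAngle m ω r p) * x i : ℝ) : ℂ) +
      Complex.I * ((dslope Real.sinh 0 (aAngle m ω r p) / (m * ω) * p i : ℝ) : ℂ) := by
  by_cases hp : p = 0
  · simp [aFun, aAngle, hp]
  have hs : √(∑ j, p j ^ 2) ≠ 0 := by
    obtain ⟨k, hk⟩ := Function.ne_iff.mp hp
    exact (Real.sqrt_pos.mpr (Finset.sum_pos' (fun j _ => sq_nonneg _)
      ⟨k, Finset.mem_univ k, pow_two_pos_of_ne_zero hk⟩)).ne'
  have hangle : r * √(∑ j, p j ^ 2) / (m * ω * r ^ 2) = aAngle m ω r p := by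
    rw [aAngle, mul_comm r, sq, ← mul_assoc, mul_div_mul_right _ _ hr]
  have hcoeff : r ^ 2 / (r * √(∑ j, p j ^ 2)) * Real.sinh (aAngle m ω r p) =
      dslope Real.sinh 0 (aAngle m ω r p) / (m * ω) := by
    by_cases ht : aAngle m ω r p = 0
    · have hmω : m * ω = 0 := by simpa [aAngle, hs, hr] using ht
      simp [ht, hmω]
    · have hmω : m * ω ≠ 0 := fun h => ht (by simp [aAngle, h])
      have hs_eq : √(∑ j, p j ^ 2) = aAngle m ω r p * (m * ω * r) := by
        rw [aAngle, div_mul_cancel₀ _ (mul_ne_zero hmω hr)]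
      rw [dslope_of_ne _ ht, slope_def_field, Real.sinh_zero, sub_zero, sub_zero, hs_eq]
      field_simp
  simp only [aFun, if_neg hp, hangle, ← hcoeff]

section Asymptotics

variable {n : ℕ} (m ω : ℝ) {p : ℝ → Fin n → ℝ} {P : Fin n → ℝ}

theorem tendsto_mul_aAngle (hp : Tendsto p atTop (𝓝 P)) :
    Tendsto (fun r => r * aAngle m ω r (p r)) atTop (𝓝 (√(∑ j, P j ^ 2) / (m * ω))) := by
  have hnorm : Tendsto (fun r => √(∑ j, p r j ^ 2)) atTop (𝓝 (√(∑ j, P j ^ 2))) :=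
    ((by fun_prop : Continuous fun q : Fin n → ℝ => √(∑ j, q j ^ 2)).tendsto P).comp hp
  refine (hnorm.div_const (m * ω)).congr' ?_
  filter_upwards [eventually_ne_atTop 0] with r hr
  rw [aAngle, mul_div_assoc', mul_comm r, mul_div_mul_right _ _ hr]

theorem tendsto_aAngle (hp : Tendsto p atTop (𝓝 P)) :
    Tendsto (fun r => aAngle m ω r (p r)) atTop (𝓝 0) := by
  refine ((tendsto_mul_aAngle m ω hp).div_atTop tendsto_id).congr' ?_
  filter_upwards [eventually_ne_atTop 0] with r hr
  exact mul_div_cancel_left₀ _ hr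

theorem tendsto_dslope_comp_aAngle {f : ℝ → ℝ} (hf : Differentiable ℝ f)
    (hp : Tendsto p atTop (𝓝 P)) :
    Tendsto (fun r => dslope f 0 (aAngle m ω r (p r))) atTop (𝓝 (deriv f 0)) := by
  rw [← dslope_same]
  exact (continuousAt_dslope_same.2 (hf 0)).tendsto.comp (tendsto_aAngle m ω hp)

theorem tendsto_aFun_apply_sub (hp : Tendsto p atTop (𝓝 P)) {x : ℝ → Fin n → ℝ} {i : Fin n}
    {L : ℝ} (hx : Tendsto (fun r => x r i / r) atTop (𝓝 L)) :
    Tendsto (fun r => aFun m ω r (x r) (p r) i - x r i) atTop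
      (𝓝 (Complex.I * P i / (m * ω : ℝ))) := by
  have hcosh : Tendsto (fun r => r * aAngle m ω r (p r) * (x r i / r) *
      dslope Real.cosh 0 (aAngle m ω r (p r))) atTop (𝓝 0) := by
    simpa using ((tendsto_mul_aAngle m ω hp).mul hx).mul
      (tendsto_dslope_comp_aAngle m ω Real.differentiable_cosh hp)
  have hsinh : Tendsto (fun r => dslope Real.sinh 0 (aAngle m ω r (p r)) / (m * ω) * p r i)
      atTop (𝓝 (1 / (m * ω) * P i)) := by
    simpa using
      ((tendsto_dslope_comp_aAngle m ω Real.differentiable_sinh hp).div_const (m * ω)).mul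
        (tendsto_pi_nhds.1 hp i)
  have hlim := (Complex.continuous_ofReal.tendsto _).comp hcosh |>.add
    (((Complex.continuous_ofReal.tendsto _).comp hsinh).const_mul Complex.I)
  convert hlim.congr' ?_ using 2
  · push_cast; ring
  filter_upwards [eventually_ne_atTop 0] with r hr
  have hcosh_sub :
      r * aAngle m ω r (p r) * (x r i / r) * dslope Real.cosh 0 (aAngle m ω r (p r)) =
        Real.cosh (aAngle m ω r (p r)) * x r i - x r i := by
    have h := sub_smul_dslope Real.cosh 0 (aAngle m ω r (p r))
    rw [smul_eq_mul, sub_zero, Real.cosh_zero] at h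
    rw [← sub_one_mul, ← h]
    field_simp
  simp only [Function.comp_apply, aFun_apply_eq m ω hr, hcosh_sub]
  push_cast
  ring

end Asymptotics

theorem tendsto_sqrt_sq_sub_sub_atTop (c : ℝ) :
    Tendsto (fun r => √(r ^ 2 - c) - r) atTop (𝓝 0) := by
  have hden : Tendsto (fun r => √(r ^ 2 - c) + r) atTop atTop :=
    tendsto_atTop_mono (fun r => le_add_of_nonneg_left (Real.sqrt_nonneg _)) tendsto_id
  refine (tendsto_const_nhds (x := -c)).div_atTop hden |>.congr' ?_
  filter_upwards [eventually_gt_atTop 0,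
    (tendsto_pow_atTop two_ne_zero).eventually_ge_atTop c] with r hr hrc
  rw [div_eq_iff (by positivity)]
  linear_combination -Real.sq_sqrt (sub_nonneg.2 hrc)

theorem tendsto_sqrt_sq_sub_atTop (c : ℝ) : Tendsto (fun r => √(r ^ 2 - c)) atTop atTop :=
  ((tendsto_sqrt_sq_sub_sub_atTop c).add_atTop tendsto_id).congr fun r => sub_add_cancel _ r

theorem tendsto_sqrt_sq_sub_div_atTop (c : ℝ) :
    Tendsto (fun r => √(r ^ 2 - c) / r) atTop (𝓝 1) := by
  have h := ((tendsto_sqrt_sq_sub_sub_atTop c).div_atTop tendsto_id).const_add 1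
  rw [add_zero] at h
  refine h.congr' ?_
  filter_upwards [eventually_ne_atTop 0] with r hr
  rw [id, sub_div, div_self hr, add_sub_cancel]

theorem tendsto_tildeP_atTop {d : ℕ} (x p : Fin d → ℝ) :
    Tendsto (fun r => tildeP r x p) atTop (𝓝 (Fin.snoc p 0)) :=
  tendsto_const_nhds.finSnoc (tendsto_const_nhds.div_atTop (tendsto_sqrt_sq_sub_atTop _))

theorem aFun_large_radius_limit_general
    (d : ℕ) (m ω : ℝ) (x0 p0 : Fin d → ℝ) :
    (∀ i : Fin d,
        Tendsto (fun r : ℝ => aFun m ω r (tildeX r x0) (tildeP r x0 p0) i.castSucc)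
          atTop (nhds (zOf m ω x0 p0 i))) ∧
    Tendsto (fun r : ℝ => aFun m ω r (tildeX r x0) (tildeP r x0 p0) (Fin.last d) - (r : ℂ))
      atTop (nhds 0) := by
  have hP := tendsto_tildeP_atTop x0 p0
  refine ⟨fun i => ?_, ?_⟩
  · have hx : Tendsto (fun r => tildeX r x0 i.castSucc / r) atTop (𝓝 0) := by
      simpa [tildeX] using tendsto_const_nhds.div_atTop tendsto_id
    have h := (tendsto_aFun_apply_sub m ω hP hx).add_const (x0 i : ℂ)
    simpa [tildeX, zOf, add_comm, mul_div_assoc] using h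
  · have hx : Tendsto (fun r => tildeX r x0 (Fin.last d) / r) atTop (𝓝 1) := by
      simpa [tildeX] using tendsto_sqrt_sq_sub_div_atTop (∑ i, x0 i ^ 2)
    have h := (tendsto_aFun_apply_sub m ω hP hx).add
      ((Complex.continuous_ofReal.tendsto 0).comp
        (tendsto_sqrt_sq_sub_sub_atTop (∑ i, x0 i ^ 2)))
    simpa [tildeX] using h

/-- As `r → ∞`, the first `d` components of `a(x̃₀, p̃₀)` converge to
`z = x₀ + i p₀/(mω)`, and the last component satisfies `a_{d+1} − r → 0`. -/
theorem aFun_large_radius_limit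
    (d : ℕ) (hd : 0 < d) (m ω : ℝ) (hm : 0 < m) (hω : 0 < ω) (x0 p0 : Fin d → ℝ) :
    (∀ i : Fin d,
        Tendsto (fun r : ℝ => aFun m ω r (tildeX r x0) (tildeP r x0 p0) i.castSucc)
          atTop (nhds (zOf m ω x0 p0 i))) ∧
    Tendsto (fun r : ℝ => aFun m ω r (tildeX r x0) (tildeP r x0 p0) (Fin.last d) - (r : ℂ))
      atTop (nhds 0) :=
  aFun_large_radius_limit_general d m ω x0 p0
end
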